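/- arXiv:2401.06254 — 2 statements merged into one kernel-verified Lean document; each statement's English description precedes it below -/
import Mathlib

section
/- For k ≥ 1, the generating function for the total number of first-column hooks of length k over all partitions of n is q^k/((q^k;q)_∞) · ∑_{l=1}^k 1/(q)_{k-l}. -/
/-- A partition: a weakly decreasing list of positive integers. -/
def PartList (L : List ℕ) : Prop := L.Pairwise (· ≥ ·) ∧ ∀ x ∈ L, 0 < x

/-- A partition of `n`. -/
def PartitionOf (n : ℕ) (L : List ℕ) : Prop := PartList L ∧ L.sum = n

/-- `L` has an `h`-fixed hook at 0-indexed position `i` (i.e. row `i+1`):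
the first-column hook length `λ_{i+1} + length - (i+1)` equals `(i+1) + h`. -/
def FixedHook (h : ℤ) (L : List ℕ) (i : ℕ) : Prop :=
  ∃ hi : i < L.length, (L.get ⟨i, hi⟩ : ℤ) + L.length - (i + 1) = (i + 1) + h

/-- `h`-fixed hook at row `i+1` arising from a part of size `k`. -/
def FixedHookPart (h : ℤ) (k : ℕ) (L : List ℕ) (i : ℕ) : Prop :=
  ∃ hi : i < L.length, L.get ⟨i, hi⟩ = k ∧ (k : ℤ) + L.length - (i + 1) = (i + 1) + h

open PowerSeries in
/-- The finite q-Pochhammer symbol `(q)_a = ∏_{k=1}^a (1 - q^k)` as a power series in `q = X`. -/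
noncomputable def poch (a : ℕ) : PowerSeries ℚ :=
  ∏ k ∈ Finset.range a, (1 - (X : PowerSeries ℚ) ^ (k + 1))

/-- The Gaussian binomial coefficient `[A choose B]_q = (q)_A / ((q)_B (q)_{A-B})`. -/
noncomputable def gauss (A B : ℕ) : PowerSeries ℚ := poch A * (poch B)⁻¹ * (poch (A - B))⁻¹

open PowerSeries in
/-- The infinite product `(q^m; q)_∞ = ∏_{k≥0} (1 - q^{m+k})`, defined coefficientwise
(the coefficient of `q^n` stabilizes in the finite partial products). -/
noncomputable def pochShiftInf (m : ℕ) : PowerSeries ℚ :=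
  PowerSeries.mk fun n =>
    coeff n (∏ k ∈ Finset.range (n + 1), (1 - (X : PowerSeries ℚ) ^ (m + k)))

open PowerSeries

namespace Stmt17Aux
open PowerSeries Finset

/-! ### Finiteness infrastructure -/

lemma length_le_sum (L : List ℕ) (h : ∀ x ∈ L, 0 < x) : L.length ≤ L.sum := by
  induction L with
  | nil => simp
  | cons a t ih =>
    simp only [List.length_cons, List.sum_cons]
    have h1 := h a (by simp)
    have h2 := ih fun x hx => h x (by simp [hx])
    omega

lemma master_finite (n : ℕ) : {L : List ℕ | (∀ x ∈ L, 0 < x) ∧ L.sum ≤ n}.Finite := by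
  have h1 : {l : List (Fin (n+1)) | l.length ≤ n}.Finite := List.finite_length_le _ n
  refine (h1.image (fun l : List (Fin (n+1)) => l.map Fin.val)).subset ?_
  rintro L ⟨hpos, hsum⟩
  have hx : ∀ x ∈ L, x < n + 1 := fun x hx =>
    Nat.lt_succ_of_le (le_trans (List.single_le_sum (fun y _ => Nat.zero_le y) x hx) hsum)
  refine ⟨L.pmap (fun x hx => (⟨x, hx⟩ : Fin (n+1))) hx, ?_, ?_⟩
  · simpa using le_trans (length_le_sum L hpos) hsum
  · simp [List.map_pmap]

lemma finite_subtype {P : List ℕ → Prop} (n : ℕ)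
    (h : ∀ L, P L → (∀ x ∈ L, 0 < x) ∧ L.sum ≤ n) : Finite {L : List ℕ // P L} :=
  ((master_finite n).subset fun L hL => h L hL).to_subtype

lemma finite_subtype_pair {P : List ℕ × List ℕ → Prop} (n : ℕ)
    (h : ∀ q, P q → (((∀ x ∈ q.1, 0 < x) ∧ q.1.sum ≤ n) ∧ ((∀ x ∈ q.2, 0 < x) ∧ q.2.sum ≤ n))) :
    Finite {q : List ℕ × List ℕ // P q} :=
  (((master_finite n).prod (master_finite n)).subset fun q hq => h q hq).to_subtype

lemma finite_subtype_main {P : List ℕ × ℕ → Prop} (n : ℕ)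
    (h : ∀ q, P q → ((∀ x ∈ q.1, 0 < x) ∧ q.1.sum ≤ n) ∧ q.2 < n + 1) :
    Finite {q : List ℕ × ℕ // P q} :=
  (((master_finite n).prod (Set.finite_Iio (n+1))).subset fun q hq => h q hq).to_subtype

/-! ### Counting functions -/

/-- Number of partitions of `n` with all parts in `S`. -/
noncomputable def cntS (S : Set ℕ) (n : ℕ) : ℕ :=
  Nat.card {L : List ℕ // L.Pairwise (· ≥ ·) ∧ (∀ x ∈ L, 0 < x ∧ x ∈ S) ∧ L.sum = n}

instance cntS_finite (S : Set ℕ) (n : ℕ) :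
    Finite {L : List ℕ // L.Pairwise (· ≥ ·) ∧ (∀ x ∈ L, 0 < x ∧ x ∈ S) ∧ L.sum = n} :=
  finite_subtype n fun L hL => ⟨fun x hx => (hL.2.1 x hx).1, le_of_eq hL.2.2⟩

/-- Number of partitions of `n` into at most `j` parts, each at most `m`. -/
noncomputable def dcnt (j m n : ℕ) : ℕ :=
  Nat.card {L : List ℕ // L.Pairwise (· ≥ ·) ∧ (∀ x ∈ L, 0 < x ∧ x ≤ m) ∧ L.length ≤ j ∧ L.sum = n}

instance dcnt_finite (j m n : ℕ) :
    Finite {L : List ℕ // L.Pairwise (· ≥ ·) ∧ (∀ x ∈ L, 0 < x ∧ x ≤ m) ∧ L.length ≤ j ∧ L.sum = n} :=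
  finite_subtype n fun L hL => ⟨fun x hx => (hL.2.1 x hx).1, le_of_eq hL.2.2.2⟩

/-- Number of partitions of `n` into exactly `j` parts, each at most `m`. -/
noncomputable def bcnt (j m n : ℕ) : ℕ :=
  Nat.card {L : List ℕ // L.Pairwise (· ≥ ·) ∧ (∀ x ∈ L, 0 < x ∧ x ≤ m) ∧ L.length = j ∧ L.sum = n}

instance bcnt_finite (j m n : ℕ) :
    Finite {L : List ℕ // L.Pairwise (· ≥ ·) ∧ (∀ x ∈ L, 0 < x ∧ x ≤ m) ∧ L.length = j ∧ L.sum = n} :=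
  finite_subtype n fun L hL => ⟨fun x hx => (hL.2.1 x hx).1, le_of_eq hL.2.2.2⟩

/-- Partitions of a small number into large parts: only the empty partition when `n = 0`. -/
lemma cntS_large {S : Set ℕ} {n : ℕ} (h : ∀ x ∈ S, n < x) :
    cntS S n = if n = 0 then 1 else 0 := by
  rcases eq_or_ne n 0 with rfl | hn
  · rw [if_pos rfl, cntS]
    have : ∀ L : List ℕ, (L.Pairwise (· ≥ ·) ∧ (∀ x ∈ L, 0 < x ∧ x ∈ S) ∧ L.sum = 0) ↔ L = [] := by
      intro L
      constructor
      · rintro ⟨-, h2, h3⟩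
        cases L with
        | nil => rfl
        | cons a t =>
          have := (h2 a (by simp)).1
          simp [List.sum_cons] at h3
          omega
      · rintro rfl; exact ⟨List.Pairwise.nil, by simp, rfl⟩
    haveI : Unique {L : List ℕ // L.Pairwise (· ≥ ·) ∧ (∀ x ∈ L, 0 < x ∧ x ∈ S) ∧ L.sum = 0} := by
      refine ⟨⟨⟨[], (this []).mpr rfl⟩⟩, ?_⟩
      rintro ⟨L, hL⟩
      exact Subtype.ext ((this L).mp hL)
    exact Nat.card_unique
  · rw [if_neg hn, cntS]
    haveI : IsEmpty {L : List ℕ // L.Pairwise (· ≥ ·) ∧ (∀ x ∈ L, 0 < x ∧ x ∈ S) ∧ L.sum = n} := by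
      refine ⟨?_⟩
      rintro ⟨L, -, h2, h3⟩
      cases L with
      | nil => simp at h3; exact hn h3.symm
      | cons a t =>
        have ha := (h2 a (by simp)).2
        have : a ≤ (a :: t).sum := List.single_le_sum (fun y _ => Nat.zero_le y) a (by simp)
        have := h a ha
        omega
    exact Nat.card_of_isEmpty

/-! ### The removal equivalence: removing an allowed part `i` -/

lemma cntS_split (S : Set ℕ) (hS : ∀ x ∈ S, 0 < x) (i : ℕ) (hiS : i ∈ S) (n : ℕ) :
    cntS S n = cntS (S \ {i}) n + if i ≤ n then cntS S (n - i) else 0 := by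
  have hipos : 0 < i := hS i hiS
  by_cases hin : i ≤ n
  · rw [if_pos hin]
    rw [cntS, cntS, cntS, ← Nat.card_sum]
    refine Nat.card_congr ?_
    refine
      { toFun := fun L => if h : i ∈ L.1 then
          Sum.inr ⟨L.1.erase i, ?_, ?_, ?_⟩ else Sum.inl ⟨L.1, L.2.1, ?_, L.2.2.2⟩
        invFun := fun x => x.elim
          (fun M => ⟨M.1, M.2.1, fun x hx => ⟨(M.2.2.1 x hx).1, (M.2.2.1 x hx).2.1⟩, M.2.2.2⟩)
          (fun M => ⟨List.orderedInsert (· ≥ ·) i M.1, ?_, ?_, ?_⟩)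
        left_inv := ?_
        right_inv := ?_ }
    · exact List.Pairwise.sublist ((List.erase_sublist (a := i) (l := L.1))) L.2.1
    · exact fun x hx => L.2.2.1 x (List.mem_of_mem_erase hx)
    · have h1 := (List.perm_cons_erase h).sum_eq
      simp only [List.sum_cons] at h1
      have h2 := L.2.2.2
      omega
    · -- i ∉ L case: parts in S \ {i}
      exact fun x hx => ⟨(L.2.2.1 x hx).1, (L.2.2.1 x hx).2, fun hxi => h (hxi ▸ hx)⟩
    · -- orderedInsert sorted
      exact List.Pairwise.orderedInsert i M.1 M.2.1
    · -- membership
      intro x hx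
      rcases (List.mem_orderedInsert _).mp hx with rfl | hx
      · exact ⟨hipos, hiS⟩
      · exact M.2.2.1 x hx
    · -- sum
      have h1 := (List.perm_orderedInsert (· ≥ ·) i M.1).sum_eq
      simp only [List.sum_cons] at h1
      have h2 := M.2.2.2
      omega
    · -- left_inv
      rintro ⟨L, hL⟩
      by_cases h : i ∈ L
      · simp only [h, dif_pos]
        apply Subtype.ext
        refine (fun hp hs => List.Perm.eq_of_pairwise (fun a b _ _ h1 h2 => le_antisymm h2 h1) hs hL.1 hp) ?_ ?_
        · exact (List.perm_orderedInsert _ i _).trans (List.perm_cons_erase h).symm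
        · exact List.Pairwise.orderedInsert i _ (List.Pairwise.sublist ((List.erase_sublist (a := i) (l := L))) hL.1)
      · simp only [h, dif_neg, not_false_iff]
        rfl
    · -- right_inv
      rintro (⟨M, hM⟩ | ⟨M, hM⟩)
      · have h : i ∉ M := fun hmem => (hM.2.1 i hmem).2.2 rfl
        exact dif_neg h
      · have h : i ∈ List.orderedInsert (· ≥ ·) i M :=
          (List.mem_orderedInsert _).mpr (Or.inl rfl)
        refine (dif_pos h).trans ?_
        congr 1
        apply Subtype.ext
        refine (fun hp hs => List.Perm.eq_of_pairwise (fun a b _ _ h1 h2 => le_antisymm h2 h1) hs hM.1 hp) ?_ ?_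
        · exact ((List.perm_orderedInsert (· ≥ ·) i M).erase i).trans
            (by rw [List.erase_cons_head])
        · exact List.Pairwise.sublist ((List.erase_sublist (a := i)))
            (List.Pairwise.orderedInsert i M hM.1)
  · rw [if_neg hin]
    rw [cntS, cntS]
    refine Nat.card_congr (Equiv.subtypeEquivRight fun L => ?_)
    have key : (L.Pairwise (· ≥ ·) ∧ (∀ x ∈ L, 0 < x ∧ x ∈ S) ∧ L.sum = n) → i ∉ L := by
      rintro ⟨-, -, h3⟩ hmem
      exact hin (h3 ▸ List.single_le_sum (fun y _ => Nat.zero_le y) i hmem)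
    constructor
    · intro hL
      exact ⟨hL.1, fun x hx => ⟨(hL.2.1 x hx).1, (hL.2.1 x hx).2,
        fun hxi => key hL (hxi ▸ hx)⟩, hL.2.2⟩
    · intro hL
      exact ⟨hL.1, fun x hx => ⟨(hL.2.1 x hx).1, (hL.2.1 x hx).2.1⟩, hL.2.2⟩

/-! ### Simple cardinality helpers -/

lemma card_eq_one_of {P : List ℕ → Prop} (h : ∀ L, P L ↔ L = []) :
    Nat.card {L : List ℕ // P L} = 1 := by
  haveI : Unique {L : List ℕ // P L} :=
    ⟨⟨⟨[], (h []).mpr rfl⟩⟩, fun L => Subtype.ext ((h L.1).mp L.2)⟩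
  exact Nat.card_unique

lemma card_eq_zero_of {P : List ℕ → Prop} (h : ∀ L, ¬ P L) :
    Nat.card {L : List ℕ // P L} = 0 := by
  haveI : IsEmpty {L : List ℕ // P L} := ⟨fun L => h L.1 L.2⟩
  exact Nat.card_of_isEmpty

lemma sum_zero_iff_nil {L : List ℕ} (hpos : ∀ x ∈ L, 0 < x) : L.sum = 0 ↔ L = [] := by
  cases L with
  | nil => simp
  | cons a t =>
    have := hpos a (by simp)
    simp only [List.sum_cons]
    constructor
    · intro h; omega
    · intro h; simp at h

/-! ### Boundary values -/

lemma dcnt_zero_left (m n : ℕ) : dcnt 0 m n = if n = 0 then 1 else 0 := by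
  rcases eq_or_ne n 0 with rfl | hn
  · rw [if_pos rfl, dcnt]
    apply card_eq_one_of
    intro L
    constructor
    · rintro ⟨-, -, h3, -⟩
      exact List.length_eq_zero_iff.mp (Nat.le_zero.mp h3)
    · rintro rfl; exact ⟨List.Pairwise.nil, by simp, by simp, rfl⟩
  · rw [if_neg hn, dcnt]
    apply card_eq_zero_of
    rintro L ⟨-, -, h3, h4⟩
    rw [List.length_eq_zero_iff.mp (Nat.le_zero.mp h3)] at h4
    simp at h4
    exact hn h4.symm

lemma dcnt_zero_right (j n : ℕ) : dcnt j 0 n = if n = 0 then 1 else 0 := by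
  rcases eq_or_ne n 0 with rfl | hn
  · rw [if_pos rfl, dcnt]
    apply card_eq_one_of
    intro L
    constructor
    · rintro ⟨-, h2, -, h4⟩
      exact (sum_zero_iff_nil fun x hx => (h2 x hx).1).mp h4
    · rintro rfl; exact ⟨List.Pairwise.nil, by simp, by simp, rfl⟩
  · rw [if_neg hn, dcnt]
    apply card_eq_zero_of
    rintro L ⟨-, h2, -, h4⟩
    cases L with
    | nil => simp at h4; exact hn h4.symm
    | cons a t => have := h2 a (by simp); omega

lemma bcnt_zero (m n : ℕ) : bcnt 0 m n = if n = 0 then 1 else 0 := by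
  rcases eq_or_ne n 0 with rfl | hn
  · rw [if_pos rfl, bcnt]
    apply card_eq_one_of
    intro L
    constructor
    · rintro ⟨-, -, h3, -⟩
      exact List.length_eq_zero_iff.mp h3
    · rintro rfl; exact ⟨List.Pairwise.nil, by simp, rfl, rfl⟩
  · rw [if_neg hn, bcnt]
    apply card_eq_zero_of
    rintro L ⟨-, -, h3, h4⟩
    rw [List.length_eq_zero_iff.mp h3] at h4
    simp at h4
    exact hn h4.symm

/-! ### The Pascal recurrence for bounded partitions -/

lemma head_struct {L : List ℕ} {m : ℕ} (hs : L.Pairwise (· ≥ ·)) (hb : ∀ x ∈ L, x ≤ m)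
    (hm : m ∈ L) : L = m :: L.tail := by
  cases L with
  | nil => simp at hm
  | cons a t =>
    rcases List.mem_cons.mp hm with rfl | hmt
    · rfl
    · have h1 : a ≥ m := (List.pairwise_cons.mp hs).1 m hmt
      have h2 : a ≤ m := hb a (by simp)
      have : a = m := le_antisymm h2 h1
      subst this
      rfl

lemma dcnt_pascal (j m n : ℕ) :
    dcnt (j+1) (m+1) n = dcnt (j+1) m n + if m+1 ≤ n then dcnt j (m+1) (n-(m+1)) else 0 := by
  by_cases hin : m + 1 ≤ n
  · rw [if_pos hin, dcnt, dcnt, dcnt, ← Nat.card_sum]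
    refine Nat.card_congr ?_
    refine
      { toFun := fun L => if h : m+1 ∈ L.1 then
          Sum.inr ⟨L.1.tail, ?_, ?_, ?_, ?_⟩ else Sum.inl ⟨L.1, L.2.1, ?_, L.2.2.2⟩
        invFun := fun x => x.elim
          (fun M => ⟨M.1, M.2.1, fun x hx => ⟨(M.2.2.1 x hx).1, le_trans (M.2.2.1 x hx).2 (by omega)⟩,
            M.2.2.2⟩)
          (fun M => ⟨(m+1) :: M.1, ?_, ?_, ?_, ?_⟩)
        left_inv := ?_
        right_inv := ?_ }
    · -- tail sorted
      exact List.Pairwise.sublist (List.tail_sublist L.1) L.2.1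
    · -- tail parts
      exact fun x hx => L.2.2.1 x ((List.tail_sublist L.1).subset hx)
    · -- tail length
      have e := head_struct L.2.1 (fun x hx => (L.2.2.1 x hx).2) h
      have := L.2.2.2.1
      have hlen : L.1.length = L.1.tail.length + 1 := by rw [e]; simp
      omega
    · -- tail sum
      have e := head_struct L.2.1 (fun x hx => (L.2.2.1 x hx).2) h
      have hsum := L.2.2.2.2
      have : L.1.sum = (m+1) + L.1.tail.sum := by
        conv_lhs => rw [e]
        simp
      omega
    · -- inl parts bound: m+1 ∉ L so parts ≤ m
      intro x hx
      refine ⟨(L.2.2.1 x hx).1, ?_⟩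
      have h2 := (L.2.2.1 x hx).2
      have : x ≠ m + 1 := fun hxe => h (hxe ▸ hx)
      omega
    · -- cons sorted
      exact List.pairwise_cons.mpr ⟨fun b hb => (M.2.2.1 b hb).2, M.2.1⟩
    · -- cons parts
      intro x hx
      rcases List.mem_cons.mp hx with rfl | hx
      · omega
      · exact M.2.2.1 x hx
    · -- cons length
      have := M.2.2.2.1
      simpa using by omega
    · -- cons sum
      have := M.2.2.2.2
      simp only [List.sum_cons]
      omega
    · -- left_inv
      rintro ⟨L, hL⟩
      by_cases h : m+1 ∈ L
      · simp only [h, dif_pos]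
        apply Subtype.ext
        exact (head_struct hL.1 (fun x hx => (hL.2.1 x hx).2) h).symm
      · simp only [h, dif_neg, not_false_iff]
        rfl
    · -- right_inv
      rintro (⟨M, hM⟩ | ⟨M, hM⟩)
      · have h : m+1 ∉ M := fun hmem => by have := (hM.2.1 _ hmem).2; omega
        exact dif_neg h
      · have h : m+1 ∈ (m+1) :: M := by simp
        exact dif_pos h
  · rw [if_neg hin, Nat.add_zero, dcnt, dcnt]
    refine Nat.card_congr (Equiv.subtypeEquivRight fun L => ?_)
    constructor
    · rintro ⟨h1, h2, h3, h4⟩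
      refine ⟨h1, fun x hx => ⟨(h2 x hx).1, ?_⟩, h3, h4⟩
      have hb := (h2 x hx).2
      have : x ≤ L.sum := List.single_le_sum (fun y _ => Nat.zero_le y) x hx
      omega
    · rintro ⟨h1, h2, h3, h4⟩
      exact ⟨h1, fun x hx => ⟨(h2 x hx).1, le_trans (h2 x hx).2 (by omega)⟩, h3, h4⟩

lemma dcnt_succ_split (j m n : ℕ) : dcnt (j+1) m n = dcnt j m n + bcnt (j+1) m n := by
  rw [dcnt, dcnt, bcnt, ← Nat.card_sum]
  refine Nat.card_congr ?_
  refine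
    { toFun := fun L => if h : L.1.length ≤ j then
        Sum.inl ⟨L.1, L.2.1, L.2.2.1, h, L.2.2.2.2⟩ else
        Sum.inr ⟨L.1, L.2.1, L.2.2.1, by have := L.2.2.2.1; omega, L.2.2.2.2⟩
      invFun := fun x => x.elim
        (fun M => ⟨M.1, M.2.1, M.2.2.1, by have := M.2.2.2.1; omega, M.2.2.2.2⟩)
        (fun M => ⟨M.1, M.2.1, M.2.2.1, by have := M.2.2.2.1; omega, M.2.2.2.2⟩)
      left_inv := ?_
      right_inv := ?_ }
  · rintro ⟨L, hL⟩
    by_cases h : L.length ≤ j <;> simp only [h, dif_pos, dif_neg, not_false_iff] <;> rfl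
  · rintro (⟨M, hM⟩ | ⟨M, hM⟩)
    · have h : M.length ≤ j := hM.2.2.1
      exact dif_pos h
    · have h : ¬ M.length ≤ j := by have := hM.2.2.1; omega
      exact dif_neg h

/-! ### Generating series -/

noncomputable def Fser (S : Set ℕ) : PowerSeries ℚ := PowerSeries.mk fun n => (cntS S n : ℚ)
noncomputable def Dser (j m : ℕ) : PowerSeries ℚ := PowerSeries.mk fun n => (dcnt j m n : ℚ)
noncomputable def Bser (j m : ℕ) : PowerSeries ℚ := PowerSeries.mk fun n => (bcnt j m n : ℚ)

lemma removal_series {S : Set ℕ} (hS : ∀ x ∈ S, 0 < x) {i : ℕ} (hiS : i ∈ S) :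
    (1 - X ^ i) * Fser S = Fser (S \ {i}) := by
  ext n
  rw [sub_mul, one_mul, mul_comm ((X : PowerSeries ℚ) ^ i), map_sub,
    PowerSeries.coeff_mul_X_pow']
  simp only [Fser, coeff_mk]
  rw [cntS_split S hS i hiS n]
  split_ifs with h
  · push_cast; ring
  · push_cast; ring

lemma removal_finset {S : Set ℕ} (hS : ∀ x ∈ S, 0 < x) (F : Finset ℕ) (hF : ∀ x ∈ F, x ∈ S) :
    (∏ i ∈ F, (1 - (X : PowerSeries ℚ) ^ i)) * Fser S = Fser (S \ ↑F) := by
  classical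
  induction F using Finset.induction generalizing S with
  | empty => simp
  | @insert a F' ha ih =>
    rw [Finset.prod_insert ha, mul_assoc, mul_left_comm,
      removal_series hS (hF a (Finset.mem_insert_self a F'))]
    rw [ih (S := S \ {a}) (fun x hx => hS x hx.1)
      (fun x hx => ⟨hF x (Finset.mem_insert_of_mem hx), fun hxa => ha (hxa ▸ hx)⟩)]
    have hSet : ((S \ {a} : Set ℕ) \ ↑F') = S \ ↑(insert a F') := by
      ext x
      simp only [Set.mem_diff, Set.mem_singleton_iff, Finset.coe_insert, Set.mem_insert_iff,
        Finset.mem_coe]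
      tauto
    rw [hSet]

lemma pochShiftInf_stab {m a n : ℕ} (hm : 1 ≤ m) (han : a ≤ n) :
    coeff a (pochShiftInf m) =
      coeff a (∏ k ∈ Finset.range (n + 1), (1 - (X : PowerSeries ℚ) ^ (m + k))) := by
  rw [pochShiftInf, coeff_mk]
  have key : ∀ N, a + 1 ≤ N →
      coeff a (∏ k ∈ Finset.range N, (1 - (X : PowerSeries ℚ) ^ (m + k))) =
      coeff a (∏ k ∈ Finset.range (a + 1), (1 - (X : PowerSeries ℚ) ^ (m + k))) := by
    intro N
    induction N with
    | zero => omega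
    | succ N ih =>
      intro hN
      rcases eq_or_lt_of_le hN with he | hlt
      · rw [← he]
      · have hN' : a + 1 ≤ N := by omega
        rw [Finset.prod_range_succ, mul_sub, mul_one, map_sub,
          PowerSeries.coeff_mul_X_pow', if_neg (by omega), sub_zero, ih hN']
  rw [key (n + 1) (by omega)]

lemma const_one_sub_pow {i : ℕ} (hi : 0 < i) :
    constantCoeff (1 - (X : PowerSeries ℚ) ^ i) = 1 := by
  rw [map_sub, map_one, ← coeff_zero_eq_constantCoeff, PowerSeries.coeff_X_pow,
    if_neg (by omega), sub_zero]

lemma const_prod {F : Finset ℕ} (h : ∀ i ∈ F, 0 < i) :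
    constantCoeff (∏ i ∈ F, (1 - (X : PowerSeries ℚ) ^ i)) = 1 := by
  rw [map_prod]
  exact Finset.prod_eq_one fun i hi => const_one_sub_pow (h i hi)

lemma poch_const (j : ℕ) : constantCoeff (poch j) = 1 := by
  rw [poch, map_prod]
  exact Finset.prod_eq_one fun i _ => const_one_sub_pow (by omega)

lemma psi_const {m : ℕ} (hm : 1 ≤ m) : constantCoeff (pochShiftInf m) = 1 := by
  rw [← coeff_zero_eq_constantCoeff, pochShiftInf, coeff_mk, Finset.prod_range_one,
    coeff_zero_eq_constantCoeff]
  exact const_one_sub_pow (by omega)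

lemma psi_mul_Fser {m : ℕ} (hm : 1 ≤ m) : pochShiftInf m * Fser {x | m ≤ x} = 1 := by
  ext n
  rw [PowerSeries.coeff_mul]
  have hstab : ∀ p ∈ Finset.HasAntidiagonal.antidiagonal n,
      coeff p.1 (pochShiftInf m) * coeff p.2 (Fser {x | m ≤ x}) =
      coeff p.1 (∏ k ∈ Finset.range (n + 1), (1 - (X : PowerSeries ℚ) ^ (m + k))) *
        coeff p.2 (Fser {x | m ≤ x}) := by
    intro p hp
    have hle : p.1 ≤ n := by
      have := Finset.HasAntidiagonal.mem_antidiagonal.mp hp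
      omega
    rw [pochShiftInf_stab (n := n) hm hle]
  rw [Finset.sum_congr rfl hstab, ← PowerSeries.coeff_mul]
  have himg : (∏ k ∈ Finset.range (n + 1), (1 - (X : PowerSeries ℚ) ^ (m + k))) =
      ∏ i ∈ (Finset.range (n + 1)).image (m + ·), (1 - (X : PowerSeries ℚ) ^ i) := by
    rw [Finset.prod_image (fun x _ y _ h => by omega)]
  rw [himg, removal_finset (fun x hx => by simp only [Set.mem_setOf_eq] at hx; omega)
    ((Finset.range (n + 1)).image (m + ·))
    (fun x hx => by
      simp only [Finset.mem_image, Finset.mem_range] at hx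
      obtain ⟨b, hb, rfl⟩ := hx
      simp only [Set.mem_setOf_eq]
      omega)]
  have hset : ({x | m ≤ x} \ ↑((Finset.range (n + 1)).image (m + ·))) = {x | m + n + 1 ≤ x} := by
    ext x
    constructor
    · rintro ⟨h1, h2⟩
      simp only [Set.mem_setOf_eq] at h1 ⊢
      by_contra hc
      push_neg at hc
      refine h2 ?_
      simp only [Finset.coe_image, Set.mem_image, Finset.mem_coe, Finset.mem_range]
      exact ⟨x - m, by omega, by omega⟩
    · intro h
      simp only [Set.mem_setOf_eq] at h
      refine ⟨by simp only [Set.mem_setOf_eq]; omega, ?_⟩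
      intro hx
      simp only [Finset.coe_image, Set.mem_image, Finset.mem_coe, Finset.mem_range] at hx
      obtain ⟨b, hb, hbe⟩ := hx
      omega
  rw [hset]
  rw [Fser, coeff_mk, cntS_large (fun x hx => by simp only [Set.mem_setOf_eq] at hx; omega)]
  rw [PowerSeries.coeff_one]
  split_ifs <;> norm_num

lemma psi_inv {m : ℕ} (hm : 1 ≤ m) : (pochShiftInf m)⁻¹ = Fser {x | m ≤ x} := by
  have hc : constantCoeff (pochShiftInf m) ≠ 0 := by rw [psi_const hm]; norm_num
  rw [← mul_one (pochShiftInf m)⁻¹, ← psi_mul_Fser hm, ← mul_assoc,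
    PowerSeries.inv_mul_cancel _ hc, one_mul]

lemma poch_eq_prod_Icc (j : ℕ) : poch j = ∏ i ∈ Finset.Icc 1 j, (1 - (X : PowerSeries ℚ) ^ i) := by
  rw [poch, show Finset.Icc 1 j = (Finset.range j).image (· + 1) by
    ext x
    simp only [Finset.mem_Icc, Finset.mem_image, Finset.mem_range]
    constructor
    · rintro ⟨h1, h2⟩; exact ⟨x - 1, by omega, by omega⟩
    · rintro ⟨b, hb, rfl⟩; omega]
  rw [Finset.prod_image (fun x _ y _ h => by omega)]

lemma poch_mul_Fser (j : ℕ) : poch j * Fser {x | 0 < x ∧ x ≤ j} = 1 := by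
  rw [poch_eq_prod_Icc, removal_finset (fun x hx => hx.1) (Finset.Icc 1 j)
    (fun x hx => by simp only [Finset.mem_Icc] at hx; exact ⟨by omega, hx.2⟩)]
  ext n
  rw [Fser, coeff_mk, cntS_large (fun x hx => by
    simp only [Set.mem_diff, Set.mem_setOf_eq, Finset.coe_Icc, Set.mem_Icc] at hx
    omega), PowerSeries.coeff_one]
  split_ifs <;> norm_num

lemma poch_inv (j : ℕ) : (poch j)⁻¹ = Fser {x | 0 < x ∧ x ≤ j} := by
  have hc : constantCoeff (poch j) ≠ 0 := by rw [poch_const]; norm_num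
  rw [← mul_one (poch j)⁻¹, ← poch_mul_Fser j, ← mul_assoc,
    PowerSeries.inv_mul_cancel _ hc, one_mul]

/-! ### Closed forms for bounded partition series -/

lemma Dser_zero_left (m : ℕ) : Dser 0 m = 1 := by
  ext n
  rw [Dser, coeff_mk, dcnt_zero_left, PowerSeries.coeff_one]
  split_ifs <;> norm_num

lemma Dser_zero_right (j : ℕ) : Dser j 0 = 1 := by
  ext n
  rw [Dser, coeff_mk, dcnt_zero_right, PowerSeries.coeff_one]
  split_ifs <;> norm_num

lemma Bser_zero (m : ℕ) : Bser 0 m = 1 := by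
  ext n
  rw [Bser, coeff_mk, bcnt_zero, PowerSeries.coeff_one]
  split_ifs <;> norm_num

lemma Dser_pascal (j m : ℕ) :
    Dser (j+1) (m+1) = Dser (j+1) m + X ^ (m+1) * Dser j (m+1) := by
  ext n
  rw [map_add, mul_comm ((X : PowerSeries ℚ) ^ (m+1)), PowerSeries.coeff_mul_X_pow']
  simp only [Dser, coeff_mk]
  rw [dcnt_pascal]
  split_ifs with h
  · push_cast; ring
  · push_cast; ring

lemma prod_pow_congr {j : ℕ} {f g : ℕ → ℕ} (h : ∀ i, f i = g i) :
    (∏ i ∈ Finset.range j, (1 - (X : PowerSeries ℚ) ^ (f i))) =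
      ∏ i ∈ Finset.range j, (1 - (X : PowerSeries ℚ) ^ (g i)) :=
  Finset.prod_congr rfl fun i _ => by rw [h i]

lemma Dser_closed (j : ℕ) : ∀ m : ℕ,
    poch j * Dser j m = ∏ i ∈ Finset.range j, (1 - (X : PowerSeries ℚ) ^ (m+1+i)) := by
  induction j with
  | zero => intro m; simp [poch, Dser_zero_left]
  | succ j ihj =>
    intro m
    induction m with
    | zero =>
      rw [Dser_zero_right, mul_one, poch]
      exact Finset.prod_congr rfl fun i _ => by rw [show i+1 = 0+1+i by omega]
    | succ m ihm =>
      rw [Dser_pascal, mul_add, ihm]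
      have hpoch : poch (j+1) = poch j * (1 - (X : PowerSeries ℚ) ^ (j+1)) := by
        rw [poch, poch, Finset.prod_range_succ]
      have hterm : poch (j+1) * ((X : PowerSeries ℚ) ^ (m+1) * Dser j (m+1)) =
          (X : PowerSeries ℚ) ^ (m+1) *
            ((1 - (X : PowerSeries ℚ) ^ (j+1)) * (poch j * Dser j (m+1))) := by
        rw [hpoch]; ring
      rw [hterm, ihj (m+1)]
      set P := ∏ i ∈ Finset.range j, (1 - (X : PowerSeries ℚ) ^ (m+1+1+i)) with hP
      have hA : (∏ i ∈ Finset.range (j+1), (1 - (X : PowerSeries ℚ) ^ (m+1+i))) =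
          (1 - (X : PowerSeries ℚ) ^ (m+1)) * P := by
        rw [Finset.prod_range_succ' (fun i => (1 - (X : PowerSeries ℚ) ^ (m+1+i))) j]
        rw [hP, prod_pow_congr (f := fun i => m+1+(i+1)) (g := fun i => m+1+1+i)
          (fun i => by show m+1+(i+1) = m+1+1+i; omega)]
        rw [mul_comm]
        try norm_num
      have hB : (∏ i ∈ Finset.range (j+1), (1 - (X : PowerSeries ℚ) ^ (m+1+1+i))) =
          P * (1 - (X : PowerSeries ℚ) ^ (m+1+1+j)) := by
        rw [hP, Finset.prod_range_succ]
      rw [hA, hB]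
      have hX : (X : PowerSeries ℚ) ^ (m+1+1+j) =
          (X : PowerSeries ℚ) ^ (m+1) * (X : PowerSeries ℚ) ^ (j+1) := by
        rw [← pow_add]; congr 1; omega
      rw [hX]; ring

lemma Bser_split (j m : ℕ) : Bser (j+1) m = Dser (j+1) m - Dser j m := by
  ext n
  rw [map_sub]
  simp only [Bser, Dser, coeff_mk]
  have h2 : ((dcnt (j+1) m n : ℕ) : ℚ) = ((dcnt j m n + bcnt (j+1) m n : ℕ) : ℚ) := by
    rw [dcnt_succ_split j m n]
  push_cast at h2
  linarith

lemma Bser_closed (j m : ℕ) :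
    poch j * Bser j m = X ^ j * ∏ i ∈ Finset.range j, (1 - (X : PowerSeries ℚ) ^ (m+i)) := by
  cases j with
  | zero => simp [poch, Bser_zero]
  | succ j =>
    rw [Bser_split, mul_sub]
    have hpoch : poch (j+1) = poch j * (1 - (X : PowerSeries ℚ) ^ (j+1)) := by
      rw [poch, poch, Finset.prod_range_succ]
    have hterm : poch (j+1) * Dser j m =
        (1 - (X : PowerSeries ℚ) ^ (j+1)) * (poch j * Dser j m) := by
      rw [hpoch]; ring
    rw [Dser_closed (j+1) m, hterm, Dser_closed j m]
    set Q := ∏ i ∈ Finset.range j, (1 - (X : PowerSeries ℚ) ^ (m+1+i)) with hQ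
    have hA : (∏ i ∈ Finset.range (j+1), (1 - (X : PowerSeries ℚ) ^ (m+1+i))) =
        Q * (1 - (X : PowerSeries ℚ) ^ (m+1+j)) := by
      rw [hQ, Finset.prod_range_succ]
    have hB : (∏ i ∈ Finset.range (j+1), (1 - (X : PowerSeries ℚ) ^ (m+i))) =
        (1 - (X : PowerSeries ℚ) ^ m) * Q := by
      rw [Finset.prod_range_succ' (fun i => (1 - (X : PowerSeries ℚ) ^ (m+i))) j]
      rw [hQ, prod_pow_congr (f := fun i => m+(i+1)) (g := fun i => m+1+i)
        (fun i => by show m+(i+1) = m+1+i; omega)]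
      rw [mul_comm]
      try norm_num
    rw [hA, hB]
    have hX : (X : PowerSeries ℚ) ^ (m+1+j) =
        (X : PowerSeries ℚ) ^ (j+1) * (X : PowerSeries ℚ) ^ m := by
      rw [← pow_add]; congr 1; omega
    rw [hX]; ring

/-! ### Convolution of counts -/

lemma nat_card_sigma {ι : Type} [Fintype ι] (α : ι → Type) [∀ i, Finite (α i)] :
    Nat.card (Σ i, α i) = ∑ i, Nat.card (α i) := by
  letI := fun i => Fintype.ofFinite (α i)
  simp [Nat.card_eq_fintype_card, Fintype.card_sigma]

lemma conv_card {P Q : List ℕ → Prop} (s : ℕ)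
    (hP : ∀ L, P L → ∀ x ∈ L, 0 < x) (hQ : ∀ L, Q L → ∀ x ∈ L, 0 < x) :
    Nat.card {q : List ℕ × List ℕ // (P q.1 ∧ Q q.2) ∧ q.1.sum + q.2.sum = s} =
      ∑ p ∈ Finset.HasAntidiagonal.antidiagonal s,
        Nat.card {L : List ℕ // P L ∧ L.sum = p.1} *
          Nat.card {L : List ℕ // Q L ∧ L.sum = p.2} := by
  haveI : Finite {q : List ℕ × List ℕ // (P q.1 ∧ Q q.2) ∧ q.1.sum + q.2.sum = s} :=
    finite_subtype_pair s (fun q hq => ⟨⟨hP _ hq.1.1, by omega⟩, ⟨hQ _ hq.1.2, by omega⟩⟩)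
  set α := {q : List ℕ × List ℕ // (P q.1 ∧ Q q.2) ∧ q.1.sum + q.2.sum = s} with hα
  let f : α → ↥(Finset.HasAntidiagonal.antidiagonal s) :=
    fun q => ⟨(q.1.1.sum, q.1.2.sum), Finset.HasAntidiagonal.mem_antidiagonal.mpr q.2.2⟩
  have hcard : Nat.card α = ∑ p : ↥(Finset.HasAntidiagonal.antidiagonal s), Nat.card {a : α // f a = p} := by
    rw [← nat_card_sigma (fun p : ↥(Finset.HasAntidiagonal.antidiagonal s) => {a : α // f a = p})]
    exact (Nat.card_congr (Equiv.sigmaFiberEquiv f)).symm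
  rw [hcard, ← Finset.sum_coe_sort (Finset.HasAntidiagonal.antidiagonal s)
    (fun p => Nat.card {L : List ℕ // P L ∧ L.sum = p.1} *
      Nat.card {L : List ℕ // Q L ∧ L.sum = p.2})]
  refine Finset.sum_congr rfl fun p _ => ?_
  rw [← Nat.card_prod]
  refine Nat.card_congr ?_
  refine
    { toFun := fun a =>
        (⟨a.1.1.1, a.1.2.1.1, by
          have h := Subtype.ext_iff.mp a.2
          exact (congrArg Prod.fst h : _)⟩,
         ⟨a.1.1.2, a.1.2.1.2, by
          have h := Subtype.ext_iff.mp a.2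
          exact (congrArg Prod.snd h : _)⟩)
      invFun := fun x =>
        ⟨⟨(x.1.1, x.2.1), ⟨x.1.2.1, x.2.2.1⟩, by
          have hm := Finset.HasAntidiagonal.mem_antidiagonal.mp p.2
          rw [x.1.2.2, x.2.2.2]
          exact hm⟩,
         Subtype.ext (Prod.ext x.1.2.2 x.2.2.2)⟩
      left_inv := fun a => rfl
      right_inv := fun x => rfl }

/-! ### The per-hook-position count -/

noncomputable def hcnt (k j n : ℕ) : ℕ :=
  Nat.card {q : List ℕ × List ℕ //
    ((q.1.Pairwise (· ≥ ·) ∧ ∀ x ∈ q.1, 0 < x ∧ x ∈ {x : ℕ | k - j ≤ x}) ∧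
     (q.2.Pairwise (· ≥ ·) ∧ (∀ x ∈ q.2, 0 < x ∧ x ≤ k - j) ∧ q.2.length = j)) ∧
    q.1.sum + q.2.sum + (k - j) = n}

lemma fiberP (S : Set ℕ) (a : ℕ) :
    Nat.card {L : List ℕ // (L.Pairwise (· ≥ ·) ∧ ∀ x ∈ L, 0 < x ∧ x ∈ S) ∧ L.sum = a} =
      cntS S a :=
  Nat.card_congr (Equiv.subtypeEquivRight fun L => by tauto)

lemma fiberQ (j m a : ℕ) :
    Nat.card {L : List ℕ //
        (L.Pairwise (· ≥ ·) ∧ (∀ x ∈ L, 0 < x ∧ x ≤ m) ∧ L.length = j) ∧ L.sum = a} =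
      bcnt j m a :=
  Nat.card_congr (Equiv.subtypeEquivRight fun L => by tauto)

lemma hcnt_conv {k j n : ℕ} (h : k - j ≤ n) :
    hcnt k j n = ∑ p ∈ Finset.HasAntidiagonal.antidiagonal (n - (k - j)),
      cntS {x | k - j ≤ x} p.1 * bcnt j (k - j) p.2 := by
  rw [hcnt]
  have e : Nat.card {q : List ℕ × List ℕ //
      ((q.1.Pairwise (· ≥ ·) ∧ ∀ x ∈ q.1, 0 < x ∧ x ∈ {x : ℕ | k - j ≤ x}) ∧
       (q.2.Pairwise (· ≥ ·) ∧ (∀ x ∈ q.2, 0 < x ∧ x ≤ k - j) ∧ q.2.length = j)) ∧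
      q.1.sum + q.2.sum + (k - j) = n} =
      Nat.card {q : List ℕ × List ℕ //
      ((q.1.Pairwise (· ≥ ·) ∧ ∀ x ∈ q.1, 0 < x ∧ x ∈ {x : ℕ | k - j ≤ x}) ∧
       (q.2.Pairwise (· ≥ ·) ∧ (∀ x ∈ q.2, 0 < x ∧ x ≤ k - j) ∧ q.2.length = j)) ∧
      q.1.sum + q.2.sum = n - (k - j)} :=
    Nat.card_congr (Equiv.subtypeEquivRight fun q => by
      constructor
      · rintro ⟨h1, h2⟩; exact ⟨h1, by omega⟩
      · rintro ⟨h1, h2⟩; exact ⟨h1, by omega⟩)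
  rw [e, conv_card
    (P := fun L => L.Pairwise (· ≥ ·) ∧ ∀ x ∈ L, 0 < x ∧ x ∈ {x : ℕ | k - j ≤ x})
    (Q := fun L => L.Pairwise (· ≥ ·) ∧ (∀ x ∈ L, 0 < x ∧ x ≤ k - j) ∧ L.length = j)
    (n - (k - j)) (fun L hL x hx => (hL.2 x hx).1)
    (fun L hL x hx => (hL.2.1 x hx).1)]
  exact Finset.sum_congr rfl fun p _ => by rw [fiberP, fiberQ]

lemma hcnt_empty {k j n : ℕ} (h : ¬ k - j ≤ n) : hcnt k j n = 0 := by
  rw [hcnt]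
  haveI : IsEmpty {q : List ℕ × List ℕ //
      ((q.1.Pairwise (· ≥ ·) ∧ ∀ x ∈ q.1, 0 < x ∧ x ∈ {x : ℕ | k - j ≤ x}) ∧
       (q.2.Pairwise (· ≥ ·) ∧ (∀ x ∈ q.2, 0 < x ∧ x ≤ k - j) ∧ q.2.length = j)) ∧
      q.1.sum + q.2.sum + (k - j) = n} := by
    refine ⟨?_⟩
    rintro ⟨q, -, h2⟩
    omega
  exact Nat.card_of_isEmpty

lemma hser_eq (k j : ℕ) :
    PowerSeries.mk (fun n => (hcnt k j n : ℚ)) =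
      X ^ (k - j) * (Fser {x | k - j ≤ x} * Bser j (k - j)) := by
  ext n
  rw [coeff_mk, mul_comm ((X : PowerSeries ℚ) ^ (k - j)), PowerSeries.coeff_mul_X_pow']
  by_cases h : k - j ≤ n
  · rw [if_pos h, PowerSeries.coeff_mul]
    simp only [Fser, Bser, coeff_mk]
    rw [hcnt_conv h]
    push_cast
    rfl
  · rw [if_neg h, hcnt_empty h]
    norm_num

/-! ### Structure of a sorted list around an index -/

lemma split_eq (L : List ℕ) {i : ℕ} (hi : i < L.length) :
    L = L.take i ++ L.get ⟨i, hi⟩ :: L.drop (i+1) := by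
  conv_lhs => rw [← List.take_append_drop i L]
  rw [List.drop_eq_getElem_cons hi, List.get_eq_getElem]

lemma sorted_take_ge {L : List ℕ} (hs : L.Pairwise (· ≥ ·)) {i : ℕ} (hi : i < L.length) :
    ∀ x ∈ L.take i, L.get ⟨i, hi⟩ ≤ x := by
  intro x hx
  have hs' : List.Pairwise (· ≥ ·) (L.take i ++ L.get ⟨i, hi⟩ :: L.drop (i+1)) :=
    split_eq L hi ▸ hs
  rcases List.pairwise_append.mp hs' with ⟨-, -, hrel⟩
  exact hrel x hx _ (List.mem_cons_self)

lemma sorted_drop_le {L : List ℕ} (hs : L.Pairwise (· ≥ ·)) {i : ℕ} (hi : i < L.length) :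
    ∀ x ∈ L.drop (i+1), x ≤ L.get ⟨i, hi⟩ := by
  intro x hx
  have hs' : List.Pairwise (· ≥ ·) (L.take i ++ L.get ⟨i, hi⟩ :: L.drop (i+1)) :=
    split_eq L hi ▸ hs
  rcases List.pairwise_append.mp hs' with ⟨-, h2, -⟩
  exact (List.pairwise_cons.mp h2).1 x hx

/-! ### The main decomposition -/

lemma main_card (k : ℕ) (hk : 1 ≤ k) (n : ℕ) :
    Nat.card {p : List ℕ × ℕ // PartitionOf n p.1 ∧
      ∃ hi : p.2 < p.1.length, p.1.get ⟨p.2, hi⟩ + p.1.length - (p.2 + 1) = k} =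
    ∑ j ∈ Finset.range k, hcnt k j n := by
  classical
  set α := {p : List ℕ × ℕ // PartitionOf n p.1 ∧
      ∃ hi : p.2 < p.1.length, p.1.get ⟨p.2, hi⟩ + p.1.length - (p.2 + 1) = k} with hα
  haveI : Finite α := by
    apply finite_subtype_main n
    rintro q ⟨⟨⟨hs, hpos⟩, hsum⟩, hi, heq⟩
    refine ⟨⟨hpos, le_of_eq hsum⟩, ?_⟩
    have := length_le_sum q.1 hpos
    omega
  have hjlt : ∀ a : α, a.1.1.length - (a.1.2 + 1) < k := by
    rintro ⟨⟨L, i⟩, ⟨⟨hs, hpos⟩, hsum⟩, hi, heq⟩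
    have hi' : i < L.length := hi
    have hg : 0 < L.get ⟨i, hi'⟩ := hpos _ (List.get_mem L ⟨i, hi'⟩)
    have heq' : L.get ⟨i, hi'⟩ + L.length - (i + 1) = k := heq
    show L.length - (i + 1) < k
    omega
  let f : α → Fin k := fun a => ⟨a.1.1.length - (a.1.2 + 1), hjlt a⟩
  have hcard : Nat.card α = ∑ j : Fin k, Nat.card {a : α // f a = j} := by
    rw [← nat_card_sigma (fun j : Fin k => {a : α // f a = j})]
    exact (Nat.card_congr (Equiv.sigmaFiberEquiv f)).symm
  rw [hcard, ← Fin.sum_univ_eq_sum_range (fun j => hcnt k j n) k]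
  refine Finset.sum_congr rfl fun j _ => ?_
  rw [hcnt]
  refine Nat.card_congr ?_
  refine
    { toFun := fun a =>
        ⟨(a.1.1.1.take a.1.1.2, a.1.1.1.drop (a.1.1.2 + 1)), ?_⟩
      invFun := fun b =>
        ⟨⟨(b.1.1 ++ (k - (j : ℕ)) :: b.1.2, b.1.1.length), ?_⟩, ?_⟩
      left_inv := ?_
      right_inv := ?_ }
  · -- toFun property
    obtain ⟨⟨⟨L, i⟩, ⟨⟨hs, hpos⟩, hsum⟩, hi, heq⟩, hfib⟩ := a
    have hi' : i < L.length := hi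
    have heq' : L.get ⟨i, hi'⟩ + L.length - (i + 1) = k := heq
    have hsum' : L.sum = n := hsum
    have hj : L.length - (i + 1) = (j : ℕ) := congrArg Fin.val hfib
    have hgpos : 0 < L.get ⟨i, hi'⟩ := hpos _ (List.get_mem L ⟨i, hi'⟩)
    have hg : k - (j : ℕ) = L.get ⟨i, hi'⟩ := by omega
    have hsplit := congrArg List.sum (split_eq L hi')
    rw [List.sum_append, List.sum_cons] at hsplit
    refine ⟨⟨⟨List.Pairwise.sublist (List.take_sublist i L) hs, fun x hx =>
      ⟨hpos x ((List.take_sublist i L).subset hx), ?_⟩⟩,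
      List.Pairwise.sublist (List.drop_sublist (i+1) L) hs, fun x hx =>
      ⟨hpos x ((List.drop_sublist (i+1) L).subset hx), ?_⟩, ?_⟩, ?_⟩
    · simp only [Set.mem_setOf_eq]
      rw [hg]
      exact sorted_take_ge hs hi' x hx
    · rw [hg]
      exact sorted_drop_le hs hi' x hx
    · rw [List.length_drop]
      exact hj
    · show (L.take i).sum + (L.drop (i+1)).sum + (k - (j : ℕ)) = n
      omega
  · -- invFun α-property
    obtain ⟨⟨μ, ν⟩, ⟨⟨hμs, hμm⟩, hνs, hνm, hνl⟩, hsum⟩ := b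
    have hsum' : μ.sum + ν.sum + (k - (j : ℕ)) = n := hsum
    have hνl' : ν.length = (j : ℕ) := hνl
    have hkj : 0 < k - (j : ℕ) := by have := j.2; omega
    have hμge : ∀ x ∈ μ, k - (j : ℕ) ≤ x := fun x hx => (hμm x hx).2
    have hL : (μ ++ (k - (j : ℕ)) :: ν).Pairwise (· ≥ ·) := by
      rw [List.pairwise_append]
      refine ⟨hμs, List.pairwise_cons.mpr ⟨fun b hb => (hνm b hb).2, hνs⟩, ?_⟩
      intro x hx y hy
      rcases List.mem_cons.mp hy with rfl | hy
      · exact hμge x hx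
      · exact le_trans (hνm y hy).2 (hμge x hx)
    have hilen : μ.length < (μ ++ (k - (j : ℕ)) :: ν).length := by
      simp only [List.length_append, List.length_cons]
      omega
    have hget : (μ ++ (k - (j : ℕ)) :: ν).get ⟨μ.length, hilen⟩ = k - (j : ℕ) := by
      rw [List.get_eq_getElem, List.getElem_append_right (le_refl μ.length)]
      simp
    refine ⟨⟨⟨hL, ?_⟩, ?_⟩, hilen, ?_⟩
    · intro x hx
      rcases List.mem_append.mp hx with hx | hx
      · exact (hμm x hx).1
      · rcases List.mem_cons.mp hx with rfl | hx
        · exact hkj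
        · exact (hνm x hx).1
    · show (μ ++ (k - (j : ℕ)) :: ν).sum = n
      rw [List.sum_append, List.sum_cons]
      omega
    · show (μ ++ (k - (j : ℕ)) :: ν).get ⟨μ.length, hilen⟩ +
        (μ ++ (k - (j : ℕ)) :: ν).length - (μ.length + 1) = k
      rw [hget]
      simp only [List.length_append, List.length_cons]
      have := j.2
      omega
  · -- invFun fiber-property
    obtain ⟨⟨μ, ν⟩, ⟨⟨hμs, hμm⟩, hνs, hνm, hνl⟩, hsum⟩ := b
    have hνl' : ν.length = (j : ℕ) := hνl
    apply Fin.ext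
    show (μ ++ (k - (j : ℕ)) :: ν).length - (μ.length + 1) = (j : ℕ)
    simp only [List.length_append, List.length_cons]
    omega
  · -- left_inv
    rintro ⟨⟨⟨L, i⟩, ⟨⟨hs, hpos⟩, hsum⟩, hi, heq⟩, hfib⟩
    apply Subtype.ext
    apply Subtype.ext
    have hi' : i < L.length := hi
    have heq' : L.get ⟨i, hi'⟩ + L.length - (i + 1) = k := heq
    have hj : L.length - (i + 1) = (j : ℕ) := congrArg Fin.val hfib
    have hgpos : 0 < L.get ⟨i, hi'⟩ := hpos _ (List.get_mem L ⟨i, hi'⟩)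
    have hg : k - (j : ℕ) = L.get ⟨i, hi'⟩ := by omega
    refine Prod.ext ?_ ?_
    · show L.take i ++ (k - (j : ℕ)) :: L.drop (i+1) = L
      rw [hg]
      exact (split_eq L hi').symm
    · show (L.take i).length = i
      rw [List.length_take]
      omega
  · -- right_inv
    rintro ⟨⟨μ, ν⟩, hb⟩
    apply Subtype.ext
    refine Prod.ext ?_ ?_
    · show (μ ++ (k - (j : ℕ)) :: ν).take μ.length = μ
      exact List.take_left
    · show (μ ++ (k - (j : ℕ)) :: ν).drop (μ.length + 1) = ν
      rw [List.drop_append]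
      simp

end Stmt17Aux

open Stmt17Aux in
/-- The generating function for the total number of first-column hooks of length `k` over
all partitions of `n` (counting pairs of a partition and a position where the hook length
is `k`) is `q^k/(q^k;q)_∞ · ∑_{l=1}^k 1/(q)_{k-l}`. -/
theorem stmt17 (k : ℕ) (hk : 1 ≤ k) :
    PowerSeries.mk (fun n =>
        (Nat.card {p : List ℕ × ℕ // PartitionOf n p.1 ∧
          ∃ hi : p.2 < p.1.length, p.1.get ⟨p.2, hi⟩ + p.1.length - (p.2 + 1) = k} : ℚ)) =
      (X : PowerSeries ℚ) ^ k * (pochShiftInf k)⁻¹ *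
        ∑ l ∈ Finset.Icc 1 k, (poch (k - l))⁻¹ := by
  have h1 : (PowerSeries.mk fun n =>
      (Nat.card {p : List ℕ × ℕ // PartitionOf n p.1 ∧
        ∃ hi : p.2 < p.1.length, p.1.get ⟨p.2, hi⟩ + p.1.length - (p.2 + 1) = k} : ℚ)) =
      ∑ j ∈ Finset.range k, PowerSeries.mk fun n => (hcnt k j n : ℚ) := by
    ext n
    rw [coeff_mk, main_card k hk n, map_sum]
    push_cast
    simp [coeff_mk]
  rw [h1]
  have h2 : ∀ j ∈ Finset.range k, (PowerSeries.mk fun n => (hcnt k j n : ℚ)) =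
      (X : PowerSeries ℚ) ^ k * (pochShiftInf k)⁻¹ * (poch j)⁻¹ := by
    intro j hj
    rw [Finset.mem_range] at hj
    rw [hser_eq k j]
    set m := k - j with hm
    have hm1 : 1 ≤ m := by omega
    have hmk : m + j = k := by omega
    set R := ∏ i ∈ Finset.Icc m (k-1), (1 - (X : PowerSeries ℚ) ^ i) with hR
    have hR1 : R * Fser {x | m ≤ x} = Fser {x | k ≤ x} := by
      rw [hR, removal_finset (fun x hx => by simp only [Set.mem_setOf_eq] at hx; omega)
        (Finset.Icc m (k-1)) (fun x hx => by
          simp only [Finset.mem_Icc] at hx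
          simp only [Set.mem_setOf_eq]
          omega)]
      have hset : ({x | m ≤ x} \ ↑(Finset.Icc m (k-1))) = {x | k ≤ x} := by
        ext x
        simp only [Set.mem_diff, Set.mem_setOf_eq, Finset.coe_Icc, Set.mem_Icc, not_and, not_le]
        omega
      rw [hset]
    have hR2 : poch j * Bser j m = (X : PowerSeries ℚ) ^ j * R := by
      rw [Bser_closed j m, hR]
      congr 1
      rw [show Finset.Icc m (k-1) = (Finset.range j).image (m + ·) from by
        ext x
        simp only [Finset.mem_Icc, Finset.mem_image, Finset.mem_range]
        constructor
        · rintro ⟨ha, hb⟩; exact ⟨x - m, by omega, by omega⟩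
        · rintro ⟨b, hb, rfl⟩; omega]
      rw [Finset.prod_image (fun x _ y _ h => by omega)]
    have hFk : (pochShiftInf k)⁻¹ = Fser {x | k ≤ x} := psi_inv hk
    have hpne : poch j ≠ 0 := fun h0 => by
      have := poch_const j
      rw [h0] at this
      simp at this
    apply mul_left_cancel₀ hpne
    have hcpj : (poch j)⁻¹ * poch j = 1 :=
      PowerSeries.inv_mul_cancel _ (by rw [poch_const]; norm_num)
    calc poch j * ((X : PowerSeries ℚ) ^ m * (Fser {x | m ≤ x} * Bser j m))
        = (X : PowerSeries ℚ) ^ m * Fser {x | m ≤ x} * (poch j * Bser j m) := by ring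
      _ = (X : PowerSeries ℚ) ^ m * Fser {x | m ≤ x} * ((X : PowerSeries ℚ) ^ j * R) := by
          rw [hR2]
      _ = (X : PowerSeries ℚ) ^ (m + j) * (R * Fser {x | m ≤ x}) := by rw [pow_add]; ring
      _ = (X : PowerSeries ℚ) ^ k * Fser {x | k ≤ x} := by rw [hmk, hR1]
      _ = poch j * ((X : PowerSeries ℚ) ^ k * (pochShiftInf k)⁻¹ * (poch j)⁻¹) := by
          rw [hFk]
          calc (X : PowerSeries ℚ) ^ k * Fser {x | k ≤ x}
              = (X : PowerSeries ℚ) ^ k * Fser {x | k ≤ x} * ((poch j)⁻¹ * poch j) := by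
                rw [hcpj, mul_one]
            _ = poch j * ((X : PowerSeries ℚ) ^ k * Fser {x | k ≤ x} * (poch j)⁻¹) := by ring
  rw [Finset.sum_congr rfl h2]
  have h3 : ∑ l ∈ Finset.Icc 1 k, (poch (k - l))⁻¹ =
      ∑ j ∈ Finset.range k, (poch j)⁻¹ := by
    refine Finset.sum_nbij' (fun l => k - l) (fun j => k - j) ?_ ?_ ?_ ?_ ?_
    · intro a ha; simp only [Finset.mem_Icc] at ha; simp only [Finset.mem_range]; omega
    · intro a ha; simp only [Finset.mem_range] at ha; simp only [Finset.mem_Icc]; omega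
    · intro a ha; simp only [Finset.mem_Icc] at ha; show k - (k - a) = a; omega
    · intro a ha; simp only [Finset.mem_range] at ha; show k - (k - a) = a; omega
    · intro a ha; rfl
  rw [h3, Finset.mul_sum]
end

section
/- For k ≥ 1, the identity ∑_{l=1}^k [k-1 choose l-1]_q / (q^l;q)_∞ = (1/(q^k;q)_∞) ∑_{l=1}^k 1/(q)_{k-l} holds as formal power series. -/
open PowerSeries Finset

/-- Products of series of the form `1 - X^j` with `j > n` are `1` mod `X^(n+1)`. -/
lemma aux_prod_sub_one_dvd (n : ℕ) (f : ℕ → ℕ) (s : Finset ℕ) (h : ∀ j ∈ s, n + 1 ≤ f j) :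
    (X : PowerSeries ℚ) ^ (n + 1) ∣ (∏ j ∈ s, (1 - (X : PowerSeries ℚ) ^ f j)) - 1 := by
  classical
  induction s using Finset.induction with
  | empty => simp
  | @insert a s ha ih =>
    rw [Finset.prod_insert ha]
    have h1 : (X : PowerSeries ℚ) ^ (n + 1) ∣ (1 - (X : PowerSeries ℚ) ^ f a) - 1 := by
      simp only [sub_sub_cancel_left, dvd_neg]
      exact pow_dvd_pow _ (h a (Finset.mem_insert_self a s))
    have h2 := ih (fun j hj => h j (Finset.mem_insert_of_mem hj))
    have : (1 - (X : PowerSeries ℚ) ^ f a) * (∏ j ∈ s, (1 - (X : PowerSeries ℚ) ^ f j)) - 1 =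
        (1 - (X : PowerSeries ℚ) ^ f a) * ((∏ j ∈ s, (1 - (X : PowerSeries ℚ) ^ f j)) - 1) +
          ((1 - (X : PowerSeries ℚ) ^ f a) - 1) := by ring
    rw [this]
    exact dvd_add (Dvd.dvd.mul_left h2 _) h1

/-- Stabilization of coefficients of the partial products. -/
lemma aux_coeff_stab (m n : ℕ) {N N' : ℕ} (hN : N ≤ N') (h : n + 1 ≤ m + N) :
    coeff n (∏ k ∈ Finset.range N', (1 - (X : PowerSeries ℚ) ^ (m + k))) =
      coeff n (∏ k ∈ Finset.range N, (1 - (X : PowerSeries ℚ) ^ (m + k))) := by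
  rw [← Finset.prod_range_mul_prod_Ico _ hN]
  have hd : (X : PowerSeries ℚ) ^ (n + 1) ∣
      (∏ k ∈ Finset.Ico N N', (1 - (X : PowerSeries ℚ) ^ (m + k))) - 1 := by
    apply aux_prod_sub_one_dvd n (fun k => m + k)
    intro j hj
    have := (Finset.mem_Ico.mp hj).1
    omega
  obtain ⟨r, hr⟩ := hd
  have : (∏ k ∈ Finset.Ico N N', (1 - (X : PowerSeries ℚ) ^ (m + k))) =
      1 + X ^ (n + 1) * r := by rw [← hr]; ring
  rw [this, mul_add, mul_one, map_add]
  have : coeff n ((∏ k ∈ Finset.range N, (1 - (X : PowerSeries ℚ) ^ (m + k))) *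
      (X ^ (n + 1) * r)) = 0 := by
    have hdvd : (X : PowerSeries ℚ) ^ (n + 1) ∣
        (∏ k ∈ Finset.range N, (1 - (X : PowerSeries ℚ) ^ (m + k))) * (X ^ (n + 1) * r) :=
      ⟨(∏ k ∈ Finset.range N, (1 - (X : PowerSeries ℚ) ^ (m + k))) * r, by ring⟩
    exact PowerSeries.X_pow_dvd_iff.mp hdvd n (Nat.lt_succ_self n)
  rw [this, add_zero]

lemma aux_coeff_stab' (m n N N' : ℕ) (h : n + 1 ≤ m + N) (h' : n + 1 ≤ m + N') :
    coeff n (∏ k ∈ Finset.range N, (1 - (X : PowerSeries ℚ) ^ (m + k))) =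
      coeff n (∏ k ∈ Finset.range N', (1 - (X : PowerSeries ℚ) ^ (m + k))) := by
  rcases le_total N N' with hle | hle
  · exact (aux_coeff_stab m n hle h).symm
  · exact aux_coeff_stab m n hle h'

lemma pochShiftInf_succ (m : ℕ) : pochShiftInf m = (1 - X ^ m) * pochShiftInf (m + 1) := by
  ext n
  rw [pochShiftInf, coeff_mk]
  have hsplit : (∏ k ∈ Finset.range (n + 1), (1 - (X : PowerSeries ℚ) ^ (m + k))) =
      (1 - X ^ m) * ∏ k ∈ Finset.range n, (1 - (X : PowerSeries ℚ) ^ (m + 1 + k)) := by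
    rw [Finset.prod_range_succ' (fun k => (1 - (X : PowerSeries ℚ) ^ (m + k)))]
    rw [mul_comm, Nat.add_zero]
    congr 1
    apply Finset.prod_congr rfl
    intro i _
    congr 2
    omega
  rw [hsplit]
  -- both sides are (1 - X^m) * something; compare via sub_mul expansion
  rw [sub_mul, sub_mul, one_mul, one_mul, map_sub, map_sub]
  congr 1
  · -- coeff n of the finite product at level n equals coeff n of pochShiftInf (m+1)
    rw [pochShiftInf, coeff_mk]
    exact aux_coeff_stab' (m + 1) n n (n + 1) (by omega) (by omega)
  · -- coeff n (X^m * _) on both sides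
    rcases le_or_gt m n with hmn | hmn
    · rw [PowerSeries.coeff_X_pow_mul', PowerSeries.coeff_X_pow_mul', if_pos hmn, if_pos hmn,
        pochShiftInf, coeff_mk]
      exact aux_coeff_stab' (m + 1) (n - m) n (n - m + 1) (by omega) (by omega)
    · rw [PowerSeries.coeff_X_pow_mul', PowerSeries.coeff_X_pow_mul',
        if_neg (by omega), if_neg (by omega)]

lemma pochShiftInf_Ico {l k : ℕ} (hlk : l ≤ k) :
    pochShiftInf l = (∏ j ∈ Finset.Ico l k, (1 - (X : PowerSeries ℚ) ^ j)) * pochShiftInf k := by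
  induction k, hlk using Nat.le_induction with
  | base => simp
  | succ k hlk ih =>
    rw [Finset.prod_Ico_succ_top hlk, ih, pochShiftInf_succ k]
    ring

lemma poch_eq_Ico (a : ℕ) : poch a = ∏ j ∈ Finset.Ico 1 (a + 1), (1 - (X : PowerSeries ℚ) ^ j) := by
  rw [Finset.prod_Ico_eq_prod_range]
  simp only [Nat.add_sub_cancel, poch]
  apply Finset.prod_congr rfl
  intro i _
  rw [add_comm]

lemma constCoeff_poch (a : ℕ) : constantCoeff (poch a) ≠ 0 := by
  rw [poch, map_prod]
  simp

lemma constCoeff_Ico (l k : ℕ) (hl : 1 ≤ l) :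
    constantCoeff (∏ j ∈ Finset.Ico l k, (1 - (X : PowerSeries ℚ) ^ j)) ≠ 0 := by
  rw [map_prod]
  rw [Finset.prod_ne_zero_iff]
  intro j hj
  have hj1 : 1 ≤ j := le_trans hl (Finset.mem_Ico.mp hj).1
  simp [zero_pow (by omega : j ≠ 0)]

lemma constCoeff_pochShiftInf (m : ℕ) (hm : 1 ≤ m) :
    constantCoeff (pochShiftInf m) ≠ 0 := by
  rw [← coeff_zero_eq_constantCoeff_apply, pochShiftInf, coeff_mk]
  simp [zero_pow (by omega : m ≠ 0)]

/-- `∑_{l=1}^k [k-1 choose l-1]_q / (q^l;q)_∞ = (1/(q^k;q)_∞) ∑_{l=1}^k 1/(q)_{k-l}`. -/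
theorem stmt18 (k : ℕ) (hk : 1 ≤ k) :
    ∑ l ∈ Finset.Icc 1 k, gauss (k - 1) (l - 1) * (pochShiftInf l)⁻¹ =
      (pochShiftInf k)⁻¹ * ∑ l ∈ Finset.Icc 1 k, (poch (k - l))⁻¹ := by
  rw [Finset.mul_sum]
  apply Finset.sum_congr rfl
  intro l hl
  obtain ⟨hl1, hlk⟩ := Finset.mem_Icc.mp hl
  -- notation
  set A := ∏ j ∈ Finset.Ico l k, (1 - (X : PowerSeries ℚ) ^ j) with hA
  have hSl : pochShiftInf l = A * pochShiftInf k := pochShiftInf_Ico hlk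
  have hpoch : poch (k - 1) = poch (l - 1) * A := by
    rw [poch_eq_Ico, poch_eq_Ico, Nat.sub_add_cancel hl1, Nat.sub_add_cancel hk, hA,
      ← Finset.prod_Ico_consecutive _ hl1 hlk]
  -- cancellation helpers
  have hb := constCoeff_poch (l - 1)
  have hc := constCoeff_poch (k - l)
  have hSlne := constCoeff_pochShiftInf l hl1
  have hSkne := constCoeff_pochShiftInf k hk
  have hb1 : poch (l - 1) * (poch (l - 1))⁻¹ = 1 := PowerSeries.mul_inv_cancel _ hb
  have hc1 : poch (k - l) * (poch (k - l))⁻¹ = 1 := PowerSeries.mul_inv_cancel _ hc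
  have hSl1 : pochShiftInf l * (pochShiftInf l)⁻¹ = 1 := PowerSeries.mul_inv_cancel _ hSlne
  have hSk1 : pochShiftInf k * (pochShiftInf k)⁻¹ = 1 := PowerSeries.mul_inv_cancel _ hSkne
  have hne : poch (l - 1) * poch (k - l) * pochShiftInf l * pochShiftInf k ≠ 0 := by
    apply mul_ne_zero
    apply mul_ne_zero
    apply mul_ne_zero
    · exact fun h => hb (by rw [h]; simp)
    · exact fun h => hc (by rw [h]; simp)
    · exact fun h => hSlne (by rw [h]; simp)
    · exact fun h => hSkne (by rw [h]; simp)
  apply mul_right_cancel₀ hne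
  have lhs_eq : gauss (k - 1) (l - 1) * (pochShiftInf l)⁻¹ *
      (poch (l - 1) * poch (k - l) * pochShiftInf l * pochShiftInf k) =
      poch (k - 1) * pochShiftInf k *
        ((poch (l - 1) * (poch (l - 1))⁻¹) * (poch (k - l) * (poch (k - l))⁻¹) *
          (pochShiftInf l * (pochShiftInf l)⁻¹)) := by
    have hsub : k - 1 - (l - 1) = k - l := by omega
    rw [gauss, hsub]; ring
  have rhs_eq : (pochShiftInf k)⁻¹ * (poch (k - l))⁻¹ *
      (poch (l - 1) * poch (k - l) * pochShiftInf l * pochShiftInf k) =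
      poch (l - 1) * pochShiftInf l *
        ((poch (k - l) * (poch (k - l))⁻¹) * (pochShiftInf k * (pochShiftInf k)⁻¹)) := by
    ring
  rw [lhs_eq, rhs_eq, hb1, hc1, hSl1, hSk1, mul_one, mul_one, mul_one, hSl, hpoch]
  ring
end
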